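/- Let Γ be a free group of rank r ≥ 1 with a symmetric generating set S consisting of a free generating set of size r together with the inverses of its elements, and let T_n ∈ ℂ[Γ] be the sum of the elements of word length exactly n with respect to S. For every n ≥ 0 there exists a polynomial P_n ∈ ℤ[X] such that T_n = P_n(T₁), where P_n is evaluated at T₁ via the unique unital ring homomorphism ℤ[X] → ℂ[Γ] sending X to T₁. -/

import Mathlib

open MeasureTheory

noncomputable section

/-- Products of `n` elements of `S`. -/
def wordProds {G : Type*} [Monoid G] (S : Set G) (n : ℕ) : Set G :=
  { g | ∃ w : Fin n → G, (∀ i, w i ∈ S) ∧ (List.ofFn w).prod = g }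

/-- The sphere of radius `n` around the identity for the word metric defined by the
symmetric set `S`: the elements of word length exactly `n`. -/
def wordSphere {G : Type*} [Monoid G] (S : Set G) (n : ℕ) : Set G :=
  wordProds S n \ ⋃ k ∈ Finset.range n, wordProds S k

/-- The ball of radius `n` around the identity for the word metric defined by `S`:
the elements of word length at most `n`. -/
def wordBall {G : Type*} [Monoid G] (S : Set G) (n : ℕ) : Set G :=
  ⋃ k ∈ Finset.range (n + 1), wordSphere S k

/-- The symmetric generating set `S = {a₁^{±1}, …, a_r^{±1}}` of the free group of
rank `r`, where `a₁, …, a_r` is the standard free generating set. -/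
def freeGens (r : ℕ) : Set (FreeGroup (Fin r)) :=
  { g | ∃ i : Fin r, g = FreeGroup.of i ∨ g = (FreeGroup.of i)⁻¹ }

section HeckeAux
open FreeGroup

theorem toWord_single_mul {α : Type*} [DecidableEq α] (y : α × Bool) (g : FreeGroup α)
    {hd : α × Bool} {tl : List (α × Bool)} (h : g.toWord = hd :: tl) :
    (FreeGroup.mk [y] * g).toWord = if y.1 = hd.1 ∧ y.2 = !hd.2 then tl else y :: hd :: tl := by
  conv_lhs => rw [← FreeGroup.mk_toWord (x := g)]
  rw [FreeGroup.mul_mk, FreeGroup.toWord_mk]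
  have : FreeGroup.reduce (y :: g.toWord) = _ := FreeGroup.reduce.cons y
  rw [List.singleton_append, this]
  rw [show FreeGroup.reduce g.toWord = hd :: tl from (FreeGroup.reduce_toWord g).trans h]

theorem norm_single_mul {α : Type*} [DecidableEq α] (y : α × Bool) (g : FreeGroup α)
    {hd : α × Bool} {tl : List (α × Bool)} (h : g.toWord = hd :: tl) :
    norm (FreeGroup.mk [y] * g) = if y.1 = hd.1 ∧ y.2 = !hd.2 then norm g - 1 else norm g + 1 := by
  have := toWord_single_mul y g h
  unfold FreeGroup.norm
  split_ifs at this ⊢ <;> simp [this, h]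

theorem norm_mk_single {α : Type*} [DecidableEq α] (y : α × Bool) :
    norm (FreeGroup.mk [y]) = 1 := by
  unfold FreeGroup.norm
  rw [FreeGroup.toWord_mk, FreeGroup.reduce_singleton]
  rfl

theorem norm_single_mul_cases {α : Type*} [DecidableEq α] (y : α × Bool) (g : FreeGroup α) :
    norm (FreeGroup.mk [y] * g) = norm g + 1 ∨
      (norm (FreeGroup.mk [y] * g) + 1 = norm g ∧ 1 ≤ norm g) := by
  rcases h : g.toWord with _ | ⟨hd, tl⟩
  · left
    have hg : g = 1 := FreeGroup.toWord_eq_nil_iff.mp h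
    rw [hg, mul_one, FreeGroup.norm_one, norm_mk_single]
  · have hn : 1 ≤ norm g := by unfold FreeGroup.norm; rw [h]; simp
    rw [norm_single_mul y g h]
    split_ifs
    · right; constructor; omega; exact hn
    · left; rfl

theorem norm_mk_mod_two {α : Type*} [DecidableEq α] (L : List (α × Bool)) :
    norm (FreeGroup.mk L) % 2 = L.length % 2 := by
  obtain ⟨k, hk⟩ := FreeGroup.Red.length (FreeGroup.reduce.red (L := L))
  unfold FreeGroup.norm
  rw [FreeGroup.toWord_mk]
  omega

theorem mem_wordProds_iff {G : Type*} [Monoid G] (S : Set G) (n : ℕ) (g : G) :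
    g ∈ wordProds S n ↔ ∃ L : List G, L.length = n ∧ (∀ x ∈ L, x ∈ S) ∧ L.prod = g := by
  constructor
  · rintro ⟨w, hw, rfl⟩
    exact ⟨List.ofFn w, by simp, by simpa using fun i => hw i, rfl⟩
  · rintro ⟨L, rfl, hL, rfl⟩
    refine ⟨L.get, fun i => hL _ (List.get_mem L i), by simp⟩

theorem mem_freeGens_iff {r : ℕ} (g : FreeGroup (Fin r)) :
    g ∈ freeGens r ↔ ∃ y : Fin r × Bool, g = FreeGroup.mk [y] := by
  constructor
  · rintro ⟨i, rfl | rfl⟩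
    · exact ⟨(i, true), rfl⟩
    · exact ⟨(i, false), by rw [FreeGroup.of, FreeGroup.inv_mk]; rfl⟩
  · rintro ⟨⟨i, b⟩, rfl⟩
    refine ⟨i, ?_⟩
    cases b
    · right; rw [FreeGroup.of, FreeGroup.inv_mk]; rfl
    · left; rfl

theorem norm_list_prod {r : ℕ} (L : List (FreeGroup (Fin r))) (hL : ∀ x ∈ L, x ∈ freeGens r) :
    norm L.prod ≤ L.length ∧ norm L.prod % 2 = L.length % 2 := by
  induction L with
  | nil => simp [FreeGroup.norm_one]
  | cons x L ih =>
    obtain ⟨y, rfl⟩ := (mem_freeGens_iff x).mp (hL x (by simp))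
    have ih' := ih (fun z hz => hL z (by simp [hz]))
    rw [List.prod_cons]
    rcases norm_single_mul_cases y L.prod with h | ⟨h, h1⟩ <;> simp only [List.length_cons] <;> omega

theorem wordProds_freeGens {r : ℕ} (hr : 1 ≤ r) (n : ℕ) (g : FreeGroup (Fin r)) :
    g ∈ wordProds (freeGens r) n ↔ norm g ≤ n ∧ norm g % 2 = n % 2 := by
  constructor
  · rw [mem_wordProds_iff]
    rintro ⟨L, rfl, hL, rfl⟩
    exact norm_list_prod L hL
  · rintro ⟨h1, h2⟩
    induction n using Nat.strong_induction_on generalizing g with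
    | _ n ih =>
      match n with
      | 0 =>
        rw [mem_wordProds_iff]
        exact ⟨[], rfl, by simp, by simpa [FreeGroup.norm_eq_zero, eq_comm] using Nat.le_zero.mp h1⟩
      | (m+1) =>
        rcases eq_or_lt_of_le h1 with heq | hlt
        · -- norm g = m + 1, peel off first letter
          have hne : g.toWord ≠ [] := fun hnil => by
            rw [FreeGroup.toWord_eq_nil_iff.mp hnil, FreeGroup.norm_one] at heq; omega
          rcases hw : g.toWord with _ | ⟨hd, tl⟩
          · exact absurd hw hne
          have hlen : tl.length = m := by
            have : g.toWord.length = m + 1 := heq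
            rw [hw] at this; simpa using this
          have htl : FreeGroup.mk tl ∈ wordProds (freeGens r) m := by
            refine ih m (by omega) _ ?_ ?_
            · calc norm (FreeGroup.mk tl) ≤ tl.length := FreeGroup.norm_mk_le
                _ = m := hlen
            · rw [norm_mk_mod_two, hlen]
          rw [mem_wordProds_iff] at htl ⊢
          obtain ⟨L, hLlen, hLmem, hLprod⟩ := htl
          refine ⟨FreeGroup.mk [hd] :: L, by simp [hLlen], ?_, ?_⟩
          · intro x hx
            rcases List.mem_cons.mp hx with rfl | hx
            · exact (mem_freeGens_iff _).mpr ⟨hd, rfl⟩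
            · exact hLmem x hx
          · rw [List.prod_cons, hLprod, FreeGroup.mul_mk]
            rw [show [hd] ++ tl = g.toWord from hw.symm, FreeGroup.mk_toWord]
        · -- norm g ≤ m - 1, pad
          have hm1 : 1 ≤ m := by omega
          have hle : norm g ≤ m - 1 := by omega
          have hmem : g ∈ wordProds (freeGens r) (m - 1) := by
            refine ih (m-1) (by omega) _ hle (by omega)
          rw [mem_wordProds_iff] at hmem ⊢
          obtain ⟨L, hLlen, hLmem, hLprod⟩ := hmem
          set i0 : Fin r := ⟨0, hr⟩
          refine ⟨FreeGroup.of i0 :: (FreeGroup.of i0)⁻¹ :: L, by simp [hLlen]; omega, ?_, ?_⟩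
          · intro x hx
            rcases List.mem_cons.mp hx with rfl | hx
            · exact ⟨i0, Or.inl rfl⟩
            rcases List.mem_cons.mp hx with rfl | hx
            · exact ⟨i0, Or.inr rfl⟩
            · exact hLmem x hx
          · rw [List.prod_cons, List.prod_cons, hLprod, ← mul_assoc, mul_inv_cancel, one_mul]

theorem mem_wordSphere_iff {r : ℕ} (hr : 1 ≤ r) (n : ℕ) (g : FreeGroup (Fin r)) :
    g ∈ wordSphere (freeGens r) n ↔ norm g = n := by
  simp only [wordSphere, Set.mem_diff, Set.mem_iUnion, Finset.mem_range,
    wordProds_freeGens hr, not_exists, exists_prop]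
  constructor
  · rintro ⟨⟨h1, h2⟩, hnot⟩
    by_contra hne
    exact hnot (norm g) ⟨by omega, le_refl _, rfl⟩
  · rintro rfl
    refine ⟨⟨le_refl _, rfl⟩, ?_⟩
    rintro k ⟨hk, hle, _⟩; omega

theorem norm_eq_one_iff {α : Type*} [DecidableEq α] (g : FreeGroup α) :
    norm g = 1 ↔ ∃ y : α × Bool, g = FreeGroup.mk [y] := by
  constructor
  · intro h
    rcases hw : g.toWord with _ | ⟨hd, tl⟩
    · rw [FreeGroup.norm, hw] at h; simp at h
    · have : tl = [] := by
        have := h; rw [FreeGroup.norm, hw] at this; simpa using this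
      subst this
      exact ⟨hd, by rw [← hw, FreeGroup.mk_toWord]⟩
  · rintro ⟨y, rfl⟩; exact norm_mk_single y

theorem mk_single_injective {α : Type*} [DecidableEq α] :
    Function.Injective (fun y : α × Bool => FreeGroup.mk [y]) := by
  intro y z h
  have := congrArg FreeGroup.toWord h
  simpa [FreeGroup.toWord_mk, FreeGroup.reduce_singleton] using this

theorem inv_mk_single {α : Type*} [DecidableEq α] (y : α × Bool) :
    (FreeGroup.mk [y])⁻¹ = FreeGroup.mk [(y.1, !y.2)] := by
  rw [FreeGroup.inv_mk]; rfl

/-- The fiber-count in the product set, transported to letters. -/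
theorem fiber_card {r n : ℕ} (F1 Fn : Finset (FreeGroup (Fin r)))
    (hF1 : ∀ s, s ∈ F1 ↔ norm s = 1) (hFn : ∀ s, s ∈ Fn ↔ norm s = n)
    (g : FreeGroup (Fin r)) :
    ((F1 ×ˢ Fn).filter fun p => p.1 * p.2 = g).card =
      (Finset.univ.filter fun y : Fin r × Bool => norm (FreeGroup.mk [y] * g) = n).card := by
  refine (Finset.card_bij
    (i := fun y _ => ((FreeGroup.mk [y])⁻¹, FreeGroup.mk [y] * g)) ?_ ?_ ?_).symm
  · intro y hy
    simp only [Finset.mem_filter, Finset.mem_univ, true_and] at hy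
    simp only [Finset.mem_filter, Finset.mem_product]
    refine ⟨⟨(hF1 _).mpr ?_, (hFn _).mpr hy⟩, by group⟩
    rw [inv_mk_single]; exact norm_mk_single _
  · intro y hy z hz h
    have h1 := congrArg Prod.fst h
    simp only at h1
    exact mk_single_injective (inv_injective h1)
  · rintro ⟨s, γ⟩ hp
    simp only [Finset.mem_filter, Finset.mem_product] at hp
    obtain ⟨⟨hs, hγ⟩, hprod⟩ := hp
    obtain ⟨z, rfl⟩ := (norm_eq_one_iff s).mp ((hF1 s).mp hs)
    refine ⟨(z.1, !z.2), ?_, ?_⟩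
    · simp only [Finset.mem_filter, Finset.mem_univ, true_and]
      rw [show FreeGroup.mk [(z.1, !z.2)] = (FreeGroup.mk [z])⁻¹ from
        by rw [inv_mk_single]]
      rw [inv_mul_eq_iff_eq_mul.mpr hprod.symm] at *
      exact (hFn γ).mp hγ
    · have e : FreeGroup.mk [(z.1, !z.2)] = (FreeGroup.mk [z])⁻¹ := (inv_mk_single z).symm
      simp only [e, inv_inv, ← hprod, Prod.mk.injEq]
      exact ⟨trivial, by group⟩

theorem count_up {r n : ℕ} (g : FreeGroup (Fin r)) (hg : norm g = n + 1) :
    (Finset.univ.filter fun y : Fin r × Bool => norm (FreeGroup.mk [y] * g) = n).card = 1 := by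
  rcases hw : g.toWord with _ | ⟨hd, tl⟩
  · rw [FreeGroup.toWord_eq_nil_iff] at hw; rw [hw, FreeGroup.norm_one] at hg; omega
  have : (Finset.univ.filter fun y : Fin r × Bool => norm (FreeGroup.mk [y] * g) = n) =
      {(hd.1, !hd.2)} := by
    ext y
    simp only [Finset.mem_filter, Finset.mem_univ, true_and, Finset.mem_singleton,
      norm_single_mul y g hw, hg]
    split_ifs with h
    · simp only [eq_self_iff_true, Nat.add_sub_cancel]
      simp only [iff_true_intro trivial, true_iff]
      obtain ⟨h1, h2⟩ := h; exact Prod.ext h1 h2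
    · constructor
      · omega
      · rintro rfl; exact absurd ⟨rfl, rfl⟩ h
  rw [this, Finset.card_singleton]

theorem count_down {r n : ℕ} (hn : 2 ≤ n) (g : FreeGroup (Fin r)) (hg : norm g + 1 = n) :
    (Finset.univ.filter fun y : Fin r × Bool => norm (FreeGroup.mk [y] * g) = n).card
      = 2 * r - 1 := by
  rcases hw : g.toWord with _ | ⟨hd, tl⟩
  · rw [FreeGroup.toWord_eq_nil_iff] at hw; rw [hw, FreeGroup.norm_one] at hg; omega
  have : (Finset.univ.filter fun y : Fin r × Bool => norm (FreeGroup.mk [y] * g) = n) =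
      Finset.univ \ {(hd.1, !hd.2)} := by
    ext y
    simp only [Finset.mem_filter, Finset.mem_univ, true_and, Finset.mem_sdiff,
      Finset.mem_singleton, norm_single_mul y g hw]
    split_ifs with h
    · constructor
      · intro he; exact absurd he (by omega)
      · intro hy; exact absurd (show y = (hd.1, !hd.2) from Prod.ext h.1 h.2) hy
    · constructor
      · intro _ hy; subst hy; exact h ⟨rfl, rfl⟩
      · intro _; exact hg
  rw [this, Finset.card_sdiff_of_subset (by simp), Finset.card_singleton, Finset.card_univ]
  simp [Fintype.card_prod, mul_comm]

theorem count_base {r : ℕ} :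
    (Finset.univ.filter fun y : Fin r × Bool =>
      norm (FreeGroup.mk [y] * (1 : FreeGroup (Fin r))) = 1).card = 2 * r := by
  have : ∀ y : Fin r × Bool, norm (FreeGroup.mk [y] * 1) = 1 := by
    intro y; rw [mul_one]; exact norm_mk_single y
  rw [Finset.filter_true_of_mem (fun y _ => this y), Finset.card_univ]
  simp [Fintype.card_prod, mul_comm]

theorem hecke_rec {r : ℕ} (hr : 1 ≤ r) (F : ℕ → Finset (FreeGroup (Fin r)))
    (hFmem : ∀ n γ, γ ∈ F n ↔ norm γ = n) (n : ℕ) (hn : 1 ≤ n) :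
    (∑ γ ∈ F 1, MonoidAlgebra.single γ (1:ℂ)) * (∑ γ ∈ F n, MonoidAlgebra.single γ (1:ℂ))
      = (∑ γ ∈ F (n+1), MonoidAlgebra.single γ (1:ℂ))
        + (if n = 1 then 2*r else 2*r - 1) •
            (∑ γ ∈ F (n-1), MonoidAlgebra.single γ (1:ℂ)) := by
  classical
  have hmul : (∑ γ ∈ F 1, MonoidAlgebra.single γ (1:ℂ)) *
      (∑ γ ∈ F n, MonoidAlgebra.single γ (1:ℂ))
      = ∑ p ∈ F 1 ×ˢ F n, MonoidAlgebra.single (p.1 * p.2) (1:ℂ) := by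
    rw [Finset.sum_mul_sum, ← Finset.sum_product']
    refine Finset.sum_congr rfl fun p _ => ?_
    rw [MonoidAlgebra.single_mul_single, one_mul]
  have hmaps : ∀ p ∈ F 1 ×ˢ F n, p.1 * p.2 ∈ F (n+1) ∪ F (n-1) := by
    rintro ⟨s, γ⟩ hp
    rw [Finset.mem_product] at hp
    obtain ⟨y, rfl⟩ := (norm_eq_one_iff s).mp ((hFmem 1 s).mp hp.1)
    have hγ : norm γ = n := (hFmem n γ).mp hp.2
    rw [Finset.mem_union, hFmem, hFmem]
    rcases norm_single_mul_cases y γ with h | ⟨h, _⟩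
    · left; rw [h, hγ]
    · right; show norm (FreeGroup.mk [y] * γ) = n - 1; omega
  rw [hmul, ← Finset.sum_fiberwise_of_maps_to hmaps]
  have hdisj : Disjoint (F (n+1)) (F (n-1)) := by
    rw [Finset.disjoint_left]
    intro a h1 h2
    rw [hFmem] at h1 h2; omega
  rw [Finset.sum_union hdisj]
  have hinner : ∀ g : FreeGroup (Fin r),
      (∑ p ∈ (F 1 ×ˢ F n).filter fun p => p.1 * p.2 = g,
        MonoidAlgebra.single (p.1 * p.2) (1:ℂ))
      = ((F 1 ×ˢ F n).filter fun p => p.1 * p.2 = g).card • MonoidAlgebra.single g (1:ℂ) := by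
    intro g
    rw [← Finset.sum_const]
    refine Finset.sum_congr rfl fun p hp => ?_
    rw [(Finset.mem_filter.mp hp).2]
  have hcard : ∀ g : FreeGroup (Fin r),
      ((F 1 ×ˢ F n).filter fun p => p.1 * p.2 = g).card
      = (Finset.univ.filter fun y : Fin r × Bool => norm (FreeGroup.mk [y] * g) = n).card :=
    fiber_card (F 1) (F n) (fun s => hFmem 1 s) (fun s => hFmem n s)
  have h1 : (∑ g ∈ F (n+1), ∑ p ∈ (F 1 ×ˢ F n).filter fun p => p.1 * p.2 = g,
      MonoidAlgebra.single (p.1 * p.2) (1:ℂ))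
      = ∑ γ ∈ F (n+1), MonoidAlgebra.single γ (1:ℂ) := by
    refine Finset.sum_congr rfl fun g hg => ?_
    rw [hinner, hcard, count_up g ((hFmem (n+1) g).mp hg), one_smul]
  have h2 : (∑ g ∈ F (n-1), ∑ p ∈ (F 1 ×ˢ F n).filter fun p => p.1 * p.2 = g,
      MonoidAlgebra.single (p.1 * p.2) (1:ℂ))
      = (if n = 1 then 2*r else 2*r - 1) •
          (∑ γ ∈ F (n-1), MonoidAlgebra.single γ (1:ℂ)) := by
    rw [Finset.smul_sum]
    refine Finset.sum_congr rfl fun g hg => ?_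
    rw [hinner, hcard]
    congr 1
    have hg' : norm g = n - 1 := (hFmem (n-1) g).mp hg
    split_ifs with h
    · subst h
      have : g = 1 := by rw [← FreeGroup.norm_eq_zero, hg']
      subst this
      exact count_base
    · exact count_down (by omega) g (by omega)
  rw [h1, h2]

end HeckeAux

/-- **Hecke elements are integer polynomials in `T₁`.** Let `Γ` be the free group of rank
`r ≥ 1` with symmetric free generating set `S` of size `2r`, and let `T_n ∈ ℂ[Γ]` be the
sum of the elements of word length exactly `n`. For every `n ≥ 0` there is a polynomial
`P_n ∈ ℤ[X]` with `T_n = P_n(T₁)`, where `P_n` is evaluated at `T₁` via the unique unital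
ring homomorphism `ℤ[X] → ℂ[Γ]` sending `X` to `T₁`. -/
theorem hecke_polynomial_in_T1 (r : ℕ) (hr : 1 ≤ r)
    (T : ℕ → MonoidAlgebra ℂ (FreeGroup (Fin r)))
    (hT : ∀ n : ℕ, ∃ F : Finset (FreeGroup (Fin r)),
      (F : Set (FreeGroup (Fin r))) = wordSphere (freeGens r) n ∧
      T n = ∑ γ ∈ F, MonoidAlgebra.single γ (1 : ℂ)) :
    ∀ n : ℕ, ∃ P : Polynomial ℤ,
      T n = Polynomial.eval₂ (Int.castRingHom (MonoidAlgebra ℂ (FreeGroup (Fin r)))) (T 1) P := by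
  classical
  choose F hF hTeq using hT
  have hFmem : ∀ n γ, γ ∈ F n ↔ FreeGroup.norm γ = n := by
    intro n γ
    rw [← Finset.mem_coe, hF n, mem_wordSphere_iff hr]
  have hcomm : ∀ z : ℤ, Commute ((Int.castRingHom (MonoidAlgebra ℂ (FreeGroup (Fin r)))) z) (T 1) := fun z => Int.cast_commute z _
  let E : Polynomial ℤ →+* MonoidAlgebra ℂ (FreeGroup (Fin r)) := Polynomial.eval₂RingHom' (Int.castRingHom (MonoidAlgebra ℂ (FreeGroup (Fin r)))) (T 1) hcomm
  have hEeq : ∀ p : Polynomial ℤ,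
      Polynomial.eval₂ (Int.castRingHom (MonoidAlgebra ℂ (FreeGroup (Fin r)))) (T 1) p = E p := fun _ => rfl
  have hrec : ∀ n, 1 ≤ n → T 1 * T n
      = T (n+1) + (((if n = 1 then 2*r else 2*r-1 : ℕ) : ℤ) : MonoidAlgebra ℂ (FreeGroup (Fin r))) * T (n-1) := by
    intro n hn
    rw [hTeq 1, hTeq n, hTeq (n+1), hTeq (n-1), hecke_rec hr F hFmem n hn, nsmul_eq_mul]
    push_cast
    ring
  have key : ∀ n, (∃ P : Polynomial ℤ, T n = E P) ∧ (∃ P : Polynomial ℤ, T (n+1) = E P) := by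
    intro n
    induction n with
    | zero =>
      constructor
      · refine ⟨1, ?_⟩
        rw [map_one]
        rw [hTeq 0]
        have hF0 : F 0 = {1} := by
          ext γ; rw [hFmem, Finset.mem_singleton, FreeGroup.norm_eq_zero]
        rw [hF0, Finset.sum_singleton]
        exact MonoidAlgebra.one_def
      · exact ⟨Polynomial.X, ((Polynomial.eval₂_X _ _).symm : _)⟩
    | succ n ih =>
      refine ⟨ih.2, ?_⟩
      obtain ⟨P, hP⟩ := ih.1
      obtain ⟨Q, hQ⟩ := ih.2
      refine ⟨Polynomial.X * Q
        - Polynomial.C ((if n+1 = 1 then 2*r else 2*r-1 : ℕ) : ℤ) * P, ?_⟩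
      have h := hrec (n+1) (by omega)
      rw [Nat.add_sub_cancel] at h
      have hT2 : T (n+2) = T 1 * T (n+1)
          - (((if n+1 = 1 then 2*r else 2*r-1 : ℕ) : ℤ) : MonoidAlgebra ℂ (FreeGroup (Fin r))) * T n := by
        rw [h, add_sub_cancel_right]
      rw [hT2, hP, hQ, map_sub, map_mul, map_mul]
      rw [show (E Polynomial.X : MonoidAlgebra ℂ (FreeGroup (Fin r))) = T 1 from
        Polynomial.eval₂_X _ _]
      rw [show E (Polynomial.C ((if n+1 = 1 then 2*r else 2*r-1 : ℕ) : ℤ))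
          = (Int.castRingHom (MonoidAlgebra ℂ (FreeGroup (Fin r))))
              ((if n+1 = 1 then 2*r else 2*r-1 : ℕ) : ℤ) from
        Polynomial.eval₂_C _ _]
      rfl
  intro n
  obtain ⟨P, hP⟩ := (key n).1
  exact ⟨P, by rw [hP]; rfl⟩

end
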